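/- arXiv:math/9812024 — 4 statements merged into one kernel-verified Lean document; each statement's English description precedes it below -/
import Mathlib

section
/- The subgroup of the symmetric group S_12 (acting on {0,...,11}) generated by the 12-cycle ζ = (0 1 2 ... 11) and the involution α = (1 5)(2 10)(4 8)(7 11) has order 24, contains ⟨ζ⟩ ≅ C_12 as a normal subgroup of index 2, and is isomorphic to a semidirect product C_12 ⋊ C_2. -/
/-!
Reading `Fin 12` as `ZMod 12`, ζ is `x ↦ x + 1` and α is `x ↦ 5 * x`; since `5 ^ 2 = 1` in
`ZMod 12`, this gives `α ^ 2 = 1` and `α ζ α⁻¹ = ζ ^ 5`. These are the defining relations of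
`C₁₂ ⋊ C₂` with the generator of `C₂` acting by the unit `5`, so that semidirect product maps onto
`⟨ζ, α⟩`. The map is injective because ζ has order 12 and α is not a power of ζ, hence
`⟨ζ, α⟩` has order 24, `⟨ζ⟩` has index 2 in it and is therefore normal.
-/

open Multiplicative

section CyclicHom

variable {P : Type*} [Group P] {n : ℕ}

lemma Multiplicative.exists_zmod_eq_ofAdd_one_zpow (x : Multiplicative (ZMod n)) :
    ∃ k : ℤ, x = ofAdd 1 ^ k := by
  obtain ⟨k, hk⟩ := ZMod.intCast_surjective (toAdd x)
  exact ⟨k, by rw [← ofAdd_zsmul, zsmul_one, hk, ofAdd_toAdd]⟩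

lemma Multiplicative.zmod_two_eq_one_or_ofAdd_one (g : Multiplicative (ZMod 2)) :
    g = 1 ∨ g = ofAdd 1 := by
  revert g; decide

lemma MonoidHom.ext_zmod {f₁ f₂ : Multiplicative (ZMod n) →* P}
    (h : f₁ (ofAdd 1) = f₂ (ofAdd 1)) : f₁ = f₂ := by
  refine MonoidHom.ext fun x => ?_
  obtain ⟨k, rfl⟩ := x.exists_zmod_eq_ofAdd_one_zpow
  rw [map_zpow, map_zpow, h]

def zmodPowersHom (g : P) (hg : g ^ n = 1) : Multiplicative (ZMod n) →* P :=
  AddMonoidHom.toMultiplicativeLeft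
    (ZMod.lift n ⟨zmultiplesHom (Additive P) (Additive.ofMul g), by simp [← ofMul_pow, hg]⟩)

variable {g : P} (hg : g ^ n = 1)

@[simp]
lemma zmodPowersHom_ofAdd_one : zmodPowersHom g hg (ofAdd 1) = g := by
  have h := ZMod.lift_coe n
    ⟨zmultiplesHom (Additive P) (Additive.ofMul g), by simp [← ofMul_pow, hg]⟩ 1
  simp only [Int.cast_one] at h
  simp [zmodPowersHom, h]

lemma zmodPowersHom_ofAdd_one_zpow (k : ℤ) : zmodPowersHom g hg (ofAdd 1 ^ k) = g ^ k := by
  rw [map_zpow, zmodPowersHom_ofAdd_one]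

lemma zmodPowersHom_ofAdd [NeZero n] (x : ZMod n) : zmodPowersHom g hg (ofAdd x) = g ^ x.val := by
  conv_lhs =>
    rw [← ZMod.natCast_zmod_val x, ← nsmul_one, ofAdd_nsmul, map_pow, zmodPowersHom_ofAdd_one]

lemma zmodPowersHom_mem_zpowers (x : Multiplicative (ZMod n)) :
    zmodPowersHom g hg x ∈ Subgroup.zpowers g := by
  obtain ⟨k, rfl⟩ := x.exists_zmod_eq_ofAdd_one_zpow
  exact ⟨k, (zmodPowersHom_ofAdd_one_zpow hg k).symm⟩

lemma injective_zmodPowersHom (hn : orderOf g = n) : Function.Injective (zmodPowersHom g hg) := by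
  rw [injective_iff_map_eq_one]
  intro x hx
  obtain ⟨k, rfl⟩ := x.exists_zmod_eq_ofAdd_one_zpow
  rw [zmodPowersHom_ofAdd_one_zpow, ← orderOf_dvd_iff_zpow_eq_one, hn] at hx
  rw [← ofAdd_zsmul, zsmul_one, (ZMod.intCast_zmod_eq_zero_iff_dvd k n).2 hx, ofAdd_zero]

end CyclicHom

def ZMod.unitsMulAut (n : ℕ) : (ZMod n)ˣ →* MulAut (Multiplicative (ZMod n)) :=
  (MulAutMultiplicative (ZMod n)).symm.toMonoidHom.comp
    (DistribMulAction.toAddAut (ZMod n)ˣ (ZMod n))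

lemma ZMod.unitsMulAut_apply {n : ℕ} (u : (ZMod n)ˣ) (x : Multiplicative (ZMod n)) :
    ZMod.unitsMulAut n u x = ofAdd ((u : ZMod n) * toAdd x) :=
  rfl

section SemidirectLift

variable {P : Type*} [Group P] {n : ℕ} (u : (ZMod n)ˣ) (hu : u ^ 2 = 1)

def involutionAction : Multiplicative (ZMod 2) →* MulAut (Multiplicative (ZMod n)) :=
  (ZMod.unitsMulAut n).comp (zmodPowersHom u hu)

variable [NeZero n] {z a : P} (hz : z ^ n = 1) (ha : a ^ 2 = 1)
  (hconj : a * z * a⁻¹ = z ^ (u : ZMod n).val)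

def semidirectLift :
    Multiplicative (ZMod n) ⋊[involutionAction u hu] Multiplicative (ZMod 2) →* P :=
  SemidirectProduct.lift (zmodPowersHom z hz) (zmodPowersHom a ha) fun g => by
    rcases g.zmod_two_eq_one_or_ofAdd_one with rfl | rfl
    · ext x; simp
    · refine MonoidHom.ext_zmod ?_
      simpa [involutionAction, ZMod.unitsMulAut_apply, MulAut.conj_apply, hconj]
        using zmodPowersHom_ofAdd hz (u : ZMod n)

lemma semidirectLift_apply
    (x : Multiplicative (ZMod n) ⋊[involutionAction u hu] Multiplicative (ZMod 2)) :
    semidirectLift u hu hz ha hconj x = zmodPowersHom z hz x.left * zmodPowersHom a ha x.right :=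
  rfl

lemma range_semidirectLift : (semidirectLift u hu hz ha hconj).range = Subgroup.closure {z, a} := by
  have hz_mem : z ∈ Subgroup.closure {z, a} := Subgroup.subset_closure (Set.mem_insert _ _)
  have ha_mem : a ∈ Subgroup.closure {z, a} :=
    Subgroup.subset_closure (Set.mem_insert_of_mem _ rfl)
  apply le_antisymm
  · rintro _ ⟨x, rfl⟩
    rw [semidirectLift_apply]
    exact mul_mem (Subgroup.zpowers_le.2 hz_mem (zmodPowersHom_mem_zpowers hz _))
      (Subgroup.zpowers_le.2 ha_mem (zmodPowersHom_mem_zpowers ha _))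
  · rw [Subgroup.closure_le]
    rintro _ (rfl | rfl)
    · exact ⟨.inl (ofAdd 1), by simp [semidirectLift]⟩
    · exact ⟨.inr (ofAdd 1), by simp [semidirectLift]⟩

lemma injective_semidirectLift (hz_order : orderOf z = n) (ha_not_mem : a ∉ Subgroup.zpowers z) :
    Function.Injective (semidirectLift u hu hz ha hconj) := by
  rw [injective_iff_map_eq_one]
  rintro ⟨x, g⟩ hxg
  rw [semidirectLift_apply] at hxg
  rcases g.zmod_two_eq_one_or_ofAdd_one with rfl | rfl
  · rw [map_one, mul_one, ← map_one (zmodPowersHom z hz)] at hxg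
    exact SemidirectProduct.ext (injective_zmodPowersHom hz hz_order hxg) rfl
  · rw [zmodPowersHom_ofAdd_one, mul_eq_one_iff_inv_eq] at hxg
    exact absurd (hxg ▸ inv_mem (zmodPowersHom_mem_zpowers hz x)) ha_not_mem

end SemidirectLift

noncomputable def closureEquivSemidirectProduct {P : Type*} [Group P] {n : ℕ} [NeZero n]
    {u : (ZMod n)ˣ} {z a : P} (hu : u ^ 2 = 1) (hz : orderOf z = n) (ha : a ^ 2 = 1)
    (hconj : a * z * a⁻¹ = z ^ (u : ZMod n).val) (ha_not_mem : a ∉ Subgroup.zpowers z) :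
    Subgroup.closure {z, a} ≃*
      Multiplicative (ZMod n) ⋊[involutionAction u hu] Multiplicative (ZMod 2) :=
  have hz_pow : z ^ n = 1 := hz ▸ pow_orderOf_eq_one z
  (MulEquiv.subgroupCongr (range_semidirectLift u hu hz_pow ha hconj).symm).trans
    (MonoidHom.ofInjective (injective_semidirectLift u hu hz_pow ha hconj hz ha_not_mem)).symm

lemma Subgroup.card_mul_relIndex {G : Type*} [Group G] {H K : Subgroup G} (h : H ≤ K) :
    Nat.card H * H.relIndex K = Nat.card K := by
  rw [← relIndex_bot_left, ← relIndex_bot_left, relIndex_mul_relIndex ⊥ H K bot_le h]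

set_option maxRecDepth 10000 in
/-- Aut(M₁): the group generated by the 12-cycle ζ and the involution
α = (1 5)(2 10)(4 8)(7 11) has order 24, contains ⟨ζ⟩ ≅ C₁₂ as a normal
subgroup of index 2, and is a semidirect product C₁₂ ⋊ C₂. -/
theorem stmt_3 :
    let ζ : Equiv.Perm (Fin 12) := c[0, 1, 2, 3, 4, 5, 6, 7, 8, 9, 10, 11]
    let α : Equiv.Perm (Fin 12) := c[1, 5] * c[2, 10] * c[4, 8] * c[7, 11]
    let G : Subgroup (Equiv.Perm (Fin 12)) := Subgroup.closure {ζ, α}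
    let H : Subgroup (Equiv.Perm (Fin 12)) := Subgroup.zpowers ζ
    Nat.card G = 24 ∧ H ≤ G ∧ Nat.card H = 12 ∧
    (H.subgroupOf G).Normal ∧ (H.subgroupOf G).index = 2 ∧
    ∃ φ : Multiplicative (ZMod 2) →* MulAut (Multiplicative (ZMod 12)),
      Nonempty (G ≃* Multiplicative (ZMod 12) ⋊[φ] Multiplicative (ZMod 2)) := by
  intro ζ α G H
  have hζ : orderOf ζ = 12 := orderOf_eq_iff (by norm_num) |>.2 ⟨by decide, by decide⟩
  have hα : α ^ 2 = 1 := by decide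
  let u : (ZMod 12)ˣ := ZMod.unitOfCoprime 5 (by norm_num)
  have hu : u ^ 2 = 1 := by decide
  have hconj : α * ζ * α⁻¹ = ζ ^ (u : ZMod 12).val := by decide
  have hα_not_mem : α ∉ H := by
    rw [mem_zpowers_iff_mem_range_orderOf, hζ]; decide
  let e : G ≃* _ := closureEquivSemidirectProduct hu hζ hα hconj hα_not_mem
  have hG : Nat.card G = 24 := by simp [Nat.card_congr e.toEquiv]
  have hH : Nat.card H = 12 := (Nat.card_zpowers ζ).trans hζ
  have hHG : H ≤ G := Subgroup.zpowers_le.2 (Subgroup.subset_closure (Set.mem_insert _ _))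
  have hindex : H.relIndex G = 2 := by
    have := Subgroup.card_mul_relIndex hHG
    rw [hG, hH] at this
    omega
  exact ⟨hG, hHG, hH, Subgroup.normal_of_index_eq_two hindex, hindex, _, ⟨e⟩⟩
end

section
/- The subgroup of the symmetric group S_12 (on {0,...,11}) generated by the 12-cycle ζ = (0 1 2 ... 11) and the three involutions β_1 = (1 11)(2 10)(3 9)(4 8)(5 7), β_2 = (1 7)(3 9)(5 11), β_3 = (1 5)(2 10)(4 8)(7 11) has order 48, has ⟨ζ⟩ as a normal subgroup, and the quotient by ⟨ζ⟩ is isomorphic to the Klein four-group C_2 × C_2. -/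
/-!
The group in question is the affine group `AGL(1, ℤ/12)` of the maps `x ↦ u x + a` with `u` a unit:
`ζ` is the translation `x ↦ x + 1` and `β₁, β₂, β₃` are the multiplications by the units
`11, 7, 5` (here `ℤ/12` is `Fin 12` with the ring structure of `Fin.CommRing`). An affine map is determined by its values at `0` and `1`, so the group has order
`|(ℤ/12)ˣ| · 12 = 48`. Taking the linear part `u` is a surjective homomorphism onto `(ℤ/12)ˣ`
whose kernel is the translation group `⟨ζ⟩`, and `(ℤ/12)ˣ` is a Klein four-group because every
unit squares to `1`.
-/

open Equiv Subgroup

lemma Equiv.addRight_intCast {R : Type*} [AddCommGroupWithOne R] (k : ℤ) :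
    Equiv.addRight (k : R) = Equiv.addRight 1 ^ k := by
  induction k using Int.induction_on with
  | zero => ext; simp
  | succ k ih => ext x; simp [zpow_add_one, ← ih]; abel
  | pred k ih => ext x; simp [zpow_sub_one, ← ih]; abel

lemma Equiv.mem_zpowers_addRight_one_iff {R : Type*} [AddCommGroupWithOne R]
    (hR : Function.Surjective (Int.cast : ℤ → R)) {σ : Perm R} :
    σ ∈ zpowers (Equiv.addRight (1 : R)) ↔ ∃ a, σ = Equiv.addRight a := by
  rw [mem_zpowers_iff, hR.exists]
  simp only [Equiv.addRight_intCast, eq_comm]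

section AffineGroup

variable {R : Type*} [CommRing R]

def affinePerm (u : Rˣ) (a : R) : Perm R := u.mulLeft.trans (Equiv.addRight a)

@[simp]
lemma affinePerm_apply (u : Rˣ) (a x : R) : affinePerm u a x = u * x + a := rfl

lemma affinePerm_mul (u v : Rˣ) (a b : R) :
    affinePerm u a * affinePerm v b = affinePerm (u * v) (u * b + a) := by
  ext x
  simp only [Perm.mul_apply, affinePerm_apply, Units.val_mul]
  ring

lemma affinePerm_one_zero : affinePerm (1 : Rˣ) 0 = 1 := by
  ext x
  simp

lemma affinePerm_inv (u : Rˣ) (a : R) : (affinePerm u a)⁻¹ = affinePerm u⁻¹ (-(u⁻¹ * a)) := by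
  refine (eq_inv_of_mul_eq_one_left ?_).symm
  rw [affinePerm_mul, inv_mul_cancel, add_neg_cancel, affinePerm_one_zero]

lemma affinePerm_one_left (a : R) : affinePerm 1 a = Equiv.addRight a := by
  ext x
  simp [add_comm]

lemma affinePerm_eq_addRight_mul (u : Rˣ) (a : R) :
    affinePerm u a = Equiv.addRight a * affinePerm u 0 := by
  ext x
  simp

lemma affinePerm_inj {u v : Rˣ} {a b : R} : affinePerm u a = affinePerm v b ↔ u = v ∧ a = b := by
  refine ⟨fun h ↦ ?_, by rintro ⟨rfl, rfl⟩; rfl⟩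
  have h₀ : a = b := by simpa using congr($h 0)
  have h₁ : (u : R) + a = v + b := by simpa using congr($h 1)
  rw [h₀, add_left_inj] at h₁
  exact ⟨Units.ext h₁, h₀⟩

lemma affinePerm_injective : Function.Injective fun p : Rˣ × R ↦ affinePerm p.1 p.2 :=
  fun _ _ h ↦ Prod.ext_iff.2 (affinePerm_inj.1 h)

variable (R) in
def affineGroup : Subgroup (Perm R) where
  carrier := Set.range fun p : Rˣ × R ↦ affinePerm p.1 p.2
  one_mem' := ⟨(1, 0), affinePerm_one_zero⟩
  mul_mem' := by
    rintro _ _ ⟨⟨u, a⟩, rfl⟩ ⟨⟨v, b⟩, rfl⟩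
    exact ⟨(u * v, u * b + a), (affinePerm_mul u v a b).symm⟩
  inv_mem' := by
    rintro _ ⟨⟨u, a⟩, rfl⟩
    exact ⟨(u⁻¹, -(u⁻¹ * a)), (affinePerm_inv u a).symm⟩

lemma affinePerm_mem_affineGroup (u : Rˣ) (a : R) : affinePerm u a ∈ affineGroup R :=
  ⟨(u, a), rfl⟩

lemma card_affineGroup : Nat.card (affineGroup R) = Nat.card Rˣ * Nat.card R :=
  (Nat.card_range_of_injective affinePerm_injective).trans (Nat.card_prod _ _)

variable (R) in
def affineGroup.linearPart : affineGroup R →* Rˣ :=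
  MonoidHom.toHomUnits
    { toFun σ := σ.1 1 - σ.1 0
      map_one' := by simp
      map_mul' := by
        rintro ⟨_, ⟨u, a⟩, rfl⟩ ⟨_, ⟨v, b⟩, rfl⟩
        simp only [Subgroup.coe_mul, Perm.mul_apply, affinePerm_apply]
        ring }

open affineGroup

lemma linearPart_affinePerm (u : Rˣ) (a : R) :
    linearPart R ⟨affinePerm u a, affinePerm_mem_affineGroup u a⟩ = u := by
  ext
  simp [linearPart]

lemma linearPart_surjective : Function.Surjective (linearPart R) :=
  fun u ↦ ⟨_, linearPart_affinePerm u 0⟩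

lemma mem_ker_linearPart {σ : affineGroup R} :
    σ ∈ (linearPart R).ker ↔ ∃ a, (σ : Perm R) = Equiv.addRight a := by
  obtain ⟨_, ⟨u, a⟩, rfl⟩ := σ
  rw [MonoidHom.mem_ker, linearPart_affinePerm]
  constructor
  · rintro rfl
    exact ⟨a, affinePerm_one_left a⟩
  · rintro ⟨b, hb⟩
    exact (affinePerm_inj.1 (hb.trans (affinePerm_one_left b).symm)).1

lemma zpowers_addRight_one_le_affineGroup : zpowers (Equiv.addRight (1 : R)) ≤ affineGroup R :=
  zpowers_le.2 (affinePerm_one_left (1 : R) ▸ affinePerm_mem_affineGroup 1 1)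

lemma ker_linearPart (hR : Function.Surjective (Int.cast : ℤ → R)) :
    (linearPart R).ker = (zpowers (Equiv.addRight (1 : R))).subgroupOf (affineGroup R) := by
  ext σ
  rw [mem_ker_linearPart, mem_subgroupOf, Equiv.mem_zpowers_addRight_one_iff hR]

end AffineGroup

open Fin.CommRing

lemma Fin.intCast_surjective (n : ℕ) [NeZero n] : Function.Surjective (Int.cast : ℤ → Fin n) :=
  fun a ↦ ⟨a.val, by simp⟩

namespace AutM3

def ζ : Perm (Fin 12) := c[0, 1, 2, 3, 4, 5, 6, 7, 8, 9, 10, 11]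
def β₁ : Perm (Fin 12) := c[1, 11] * c[2, 10] * c[3, 9] * c[4, 8] * c[5, 7]
def β₂ : Perm (Fin 12) := c[1, 7] * c[3, 9] * c[5, 11]
def β₃ : Perm (Fin 12) := c[1, 5] * c[2, 10] * c[4, 8] * c[7, 11]

lemma ζ_eq_addRight : ζ = Equiv.addRight 1 := by decide

lemma range_affinePerm_zero : Set.range (fun u : (Fin 12)ˣ ↦ affinePerm u 0) = {1, β₁, β₂, β₃} := by
  refine subset_antisymm (Set.range_subset_iff.2 ?_) ?_
  · simp only [Set.mem_insert_iff, Set.mem_singleton_iff]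
    decide
  · simp only [Set.insert_subset_iff, Set.singleton_subset_iff, Set.mem_range]
    decide

lemma closure_eq_affineGroup : closure {ζ, β₁, β₂, β₃} = affineGroup (Fin 12) := by
  refine le_antisymm ((closure_le _).2 ?_) ?_
  · rintro σ (rfl | hσ)
    · rw [ζ_eq_addRight, ← affinePerm_one_left]
      exact affinePerm_mem_affineGroup 1 1
    · obtain ⟨u, rfl⟩ : σ ∈ Set.range (fun u : (Fin 12)ˣ ↦ affinePerm u 0) := by
        rw [range_affinePerm_zero]
        exact Set.mem_insert_of_mem 1 hσ
      exact affinePerm_mem_affineGroup u 0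
  · rintro _ ⟨⟨u, a⟩, rfl⟩
    have translation_mem : Equiv.addRight a ∈ closure {ζ, β₁, β₂, β₃} := by
      refine zpowers_le.2 (subset_closure (Set.mem_insert ζ _)) ?_
      rw [ζ_eq_addRight, Equiv.mem_zpowers_addRight_one_iff (Fin.intCast_surjective 12)]
      exact ⟨a, rfl⟩
    have linear_mem : affinePerm u 0 ∈ closure {ζ, β₁, β₂, β₃} := by
      obtain h | h : affinePerm u 0 ∈ ({1, β₁, β₂, β₃} : Set _) :=
        range_affinePerm_zero ▸ Set.mem_range_self u
      · exact h ▸ one_mem _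
      · exact subset_closure (Set.mem_insert_of_mem ζ h)
    change affinePerm u a ∈ _
    exact affinePerm_eq_addRight_mul u a ▸ mul_mem translation_mem linear_mem

end AutM3

instance : IsKleinFour (Fin 12)ˣ where
  card_four := by rw [Nat.card_eq_fintype_card]; decide
  exponent_two := by
    have sq_eq_one : ∀ u : (Fin 12)ˣ, u ^ 2 = 1 := by decide
    have : Nontrivial (Fin 12)ˣ := nontrivial_of_ne (-1) 1 (by decide)
    exact (Monoid.exponent_eq_prime_iff Nat.prime_two).2 fun u hu ↦
      orderOf_eq_prime (sq_eq_one u) hu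

instance : IsKleinFour (Multiplicative (ZMod 2) × Multiplicative (ZMod 2)) where
  card_four := by simp
  exponent_two := by simp [Monoid.exponent_prod]

/-- Aut(M₃): the group generated by the 12-cycle ζ and the involutions
β₁ = (1 11)(2 10)(3 9)(4 8)(5 7), β₂ = (1 7)(3 9)(5 11),
β₃ = (1 5)(2 10)(4 8)(7 11) has order 48, has ⟨ζ⟩ as a normal subgroup,
and the quotient by ⟨ζ⟩ is the Klein four-group C₂ × C₂. -/
theorem stmt_4 :
    let ζ : Equiv.Perm (Fin 12) := c[0, 1, 2, 3, 4, 5, 6, 7, 8, 9, 10, 11]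
    let β₁ : Equiv.Perm (Fin 12) := c[1, 11] * c[2, 10] * c[3, 9] * c[4, 8] * c[5, 7]
    let β₂ : Equiv.Perm (Fin 12) := c[1, 7] * c[3, 9] * c[5, 11]
    let β₃ : Equiv.Perm (Fin 12) := c[1, 5] * c[2, 10] * c[4, 8] * c[7, 11]
    let G : Subgroup (Equiv.Perm (Fin 12)) := Subgroup.closure {ζ, β₁, β₂, β₃}
    let H : Subgroup (Equiv.Perm (Fin 12)) := Subgroup.zpowers ζ
    Nat.card G = 48 ∧ H ≤ G ∧ (H.subgroupOf G).Normal ∧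
    ∃ f : G →* Multiplicative (ZMod 2) × Multiplicative (ZMod 2),
      Function.Surjective f ∧ f.ker = H.subgroupOf G := by
  intro ζ β₁ β₂ β₃ G H
  have hG : G = affineGroup (Fin 12) := AutM3.closure_eq_affineGroup
  have hH : H = zpowers (Equiv.addRight 1) := congrArg zpowers AutM3.ζ_eq_addRight
  clear_value G H
  subst hG hH
  have hker := ker_linearPart (Fin.intCast_surjective 12)
  obtain ⟨e⟩ := IsKleinFour.nonempty_mulEquiv (G₁ := (Fin 12)ˣ)
    (G₂ := Multiplicative (ZMod 2) × Multiplicative (ZMod 2))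
  refine ⟨?_, zpowers_addRight_one_le_affineGroup, hker ▸ (affineGroup.linearPart _).normal_ker,
    e.toMonoidHom.comp (affineGroup.linearPart _), e.surjective.comp linearPart_surjective, ?_⟩
  · rw [card_affineGroup, IsKleinFour.card_four, Nat.card_eq_fintype_card, Fintype.card_fin]
  · exact (MonoidHom.ker_comp_of_injective _ _ e.injective).trans hker
end

section
/- The subgroup of S_12 (on {0,...,11}) generated by the permutations g_1 = (0 7 3 4 2)(1 9 10 8 6), g_2 = (0 6)(1 7)(2 8)(3 9)(4 10)(5 11), g_3 = (0 6)(1 9)(2 5)(3 7)(4 10)(8 11), and the 12-cycle ζ = (0 1 2 ... 11) has order 240. -/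
set_option maxRecDepth 100000
set_option maxHeartbeats 1000000

def dig (n i : Nat) : Nat := n / 12 ^ i % 12

def pf (E : Nat) : Fin 12 → Fin 12 := fun i => ⟨dig E i.val, Nat.mod_lt _ (by decide)⟩

def pmk (E F : Nat) : Equiv.Perm (Fin 12) :=
  if h : Function.LeftInverse (pf F) (pf E) ∧ Function.RightInverse (pf F) (pf E)
  then ⟨pf E, pf F, h.1, h.2⟩ else 1

def hornerL (L : List Nat) : Nat := L.foldr (fun d acc => d + 12 * acc) 0

def mulE (a b : Nat) : Nat := hornerL ((List.range 12).map fun i => dig a (dig b i))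

def Codes (E : Nat) (p : Equiv.Perm (Fin 12)) : Prop :=
  ∀ i : Fin 12, (p i).val = dig E i.val

instance (E : Nat) (p : Equiv.Perm (Fin 12)) : Decidable (Codes E p) :=
  inferInstanceAs (Decidable (∀ i : Fin 12, _))

lemma dig_hornerL : ∀ (L : List Nat), (∀ d ∈ L, d < 12) →
    ∀ i (hi : i < L.length), dig (hornerL L) i = L[i]
  | d :: T, h, 0, hi => by
    simp only [hornerL, List.foldr_cons, dig, Nat.pow_zero, Nat.div_one]
    rw [Nat.add_mul_mod_self_left]
    exact Nat.mod_eq_of_lt (h d (List.mem_cons_self))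
  | d :: T, h, i + 1, hi => by
    have hd : d / 12 = 0 := Nat.div_eq_of_lt (h d (List.mem_cons_self))
    have : dig (hornerL (d :: T)) (i + 1) = dig (hornerL T) i := by
      simp only [hornerL, List.foldr_cons, dig, Nat.pow_succ]
      rw [Nat.mul_comm (12 ^ i) 12, ← Nat.div_div_eq_div_mul,
        Nat.add_mul_div_left _ _ (by norm_num : 0 < 12), hd, Nat.zero_add]
    rw [this]
    have := dig_hornerL T (fun x hx => h x (List.mem_cons_of_mem _ hx)) i
      (by simpa using Nat.lt_of_succ_lt_succ hi)
    simpa using this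

lemma dig_mulE (a b i : Nat) (hi : i < 12) : dig (mulE a b) i = dig a (dig b i) := by
  have h := dig_hornerL ((List.range 12).map fun j => dig a (dig b j))
    (by
      intro x hx
      obtain ⟨j, _, rfl⟩ := List.mem_map.mp hx
      exact Nat.mod_lt _ (by norm_num))
    i (by simpa using hi)
  simpa [mulE] using h

lemma codes_mul {a b : Nat} {p q : Equiv.Perm (Fin 12)}
    (ha : Codes a p) (hb : Codes b q) : Codes (mulE a b) (p * q) := by
  intro i
  have : ((p * q) i).val = dig a (dig b i.val) := by
    rw [Equiv.Perm.mul_apply, ha (q i), hb i]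
  rw [this, dig_mulE a b i.val i.isLt]

lemma codes_eq {a : Nat} {p q : Equiv.Perm (Fin 12)}
    (hp : Codes a p) (hq : Codes a q) : p = q :=
  Equiv.ext fun x => Fin.ext ((hp x).trans (hq x).symm)

def encf (p : Equiv.Perm (Fin 12)) : Nat :=
  hornerL ((List.finRange 12).map fun i => (p i).val)
def q1 : Equiv.Perm (Fin 12) := pmk 8722720459123 8739833159882 
def q2 : Equiv.Perm (Fin 12) := pmk 3979089407898 3979089407898 
def q3 : Equiv.Perm (Fin 12) := pmk 6201734214786 6201734214786 
def q4 : Equiv.Perm (Fin 12) := pmk 736867805641 8031859081499 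

def wordsI : List (List (Fin 4)) := [
[],
[0],
[1],
[2],
[3],
[0, 0],
[0, 2],
[0, 3],
[1, 0],
[2, 0],
[2, 1],
[2, 3],
[3, 0],
[3, 1],
[3, 2],
[3, 3],
[0, 0, 0],
[0, 0, 2],
[0, 0, 3],
[0, 2, 0],
[0, 2, 1],
[0, 2, 3],
[0, 3, 0],
[0, 3, 1],
[0, 3, 2],
[0, 3, 3],
[1, 0, 0],
[2, 0, 0],
[2, 0, 2],
[2, 0, 3],
[2, 1, 0],
[2, 3, 0],
[2, 3, 1],
[2, 3, 2],
[2, 3, 3],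
[3, 0, 0],
[3, 0, 2],
[3, 0, 3],
[3, 1, 0],
[3, 2, 0],
[3, 2, 1],
[3, 2, 3],
[3, 3, 0],
[3, 3, 1],
[3, 3, 2],
[3, 3, 3],
[0, 0, 0, 0],
[0, 0, 0, 2],
[0, 0, 0, 3],
[0, 0, 2, 0],
[0, 0, 2, 1],
[0, 0, 3, 1],
[0, 0, 3, 2],
[0, 0, 3, 3],
[0, 2, 0, 0],
[0, 2, 0, 2],
[0, 2, 0, 3],
[0, 2, 1, 0],
[0, 2, 3, 0],
[0, 2, 3, 1],
[0, 3, 0, 3],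
[0, 3, 1, 0],
[0, 3, 2, 0],
[0, 3, 2, 1],
[0, 3, 2, 3],
[0, 3, 3, 0],
[0, 3, 3, 1],
[0, 3, 3, 2],
[0, 3, 3, 3],
[1, 0, 0, 0],
[2, 0, 0, 0],
[2, 0, 0, 2],
[2, 0, 0, 3],
[2, 0, 2, 0],
[2, 0, 2, 1],
[2, 0, 3, 0],
[2, 0, 3, 1],
[2, 0, 3, 2],
[2, 0, 3, 3],
[2, 1, 0, 0],
[2, 3, 0, 0],
[2, 3, 0, 2],
[2, 3, 1, 0],
[2, 3, 2, 1],
[2, 3, 2, 3],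
[2, 3, 3, 0],
[2, 3, 3, 1],
[2, 3, 3, 2],
[2, 3, 3, 3],
[3, 0, 0, 0],
[3, 0, 0, 2],
[3, 0, 2, 0],
[3, 0, 2, 1],
[3, 0, 2, 3],
[3, 0, 3, 0],
[3, 0, 3, 1],
[3, 0, 3, 2],
[3, 0, 3, 3],
[3, 1, 0, 0],
[3, 2, 0, 0],
[3, 2, 0, 3],
[3, 2, 1, 0],
[3, 2, 3, 0],
[3, 2, 3, 1],
[3, 2, 3, 2],
[3, 2, 3, 3],
[3, 3, 0, 0],
[3, 3, 0, 2],
[3, 3, 0, 3],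
[3, 3, 1, 0],
[3, 3, 2, 0],
[3, 3, 2, 1],
[3, 3, 2, 3],
[3, 3, 3, 0],
[3, 3, 3, 1],
[3, 3, 3, 2],
[3, 3, 3, 3],
[0, 0, 0, 0, 3],
[0, 0, 0, 2, 0],
[0, 0, 2, 0, 2],
[0, 0, 2, 1, 0],
[0, 0, 3, 2, 0],
[0, 0, 3, 3, 1],
[0, 0, 3, 3, 2],
[0, 0, 3, 3, 3],
[0, 2, 0, 0, 0],
[0, 2, 0, 0, 2],
[0, 2, 0, 3, 1],
[0, 2, 1, 0, 0],
[0, 2, 3, 0, 0],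
[0, 2, 3, 1, 0],
[0, 3, 0, 3, 1],
[0, 3, 0, 3, 2],
[0, 3, 0, 3, 3],
[0, 3, 2, 0, 0],
[0, 3, 2, 1, 0],
[0, 3, 2, 3, 0],
[0, 3, 2, 3, 1],
[0, 3, 2, 3, 2],
[0, 3, 3, 2, 0],
[0, 3, 3, 2, 1],
[0, 3, 3, 3, 0],
[0, 3, 3, 3, 2],
[1, 0, 0, 0, 0],
[2, 0, 0, 0, 0],
[2, 0, 0, 2, 0],
[2, 0, 0, 3, 1],
[2, 0, 0, 3, 2],
[2, 0, 0, 3, 3],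
[2, 0, 2, 0, 0],
[2, 0, 2, 0, 3],
[2, 0, 2, 1, 0],
[2, 0, 3, 0, 3],
[2, 0, 3, 1, 0],
[2, 0, 3, 2, 0],
[2, 0, 3, 3, 0],
[2, 0, 3, 3, 1],
[2, 0, 3, 3, 2],
[2, 3, 0, 0, 0],
[2, 3, 0, 0, 2],
[2, 3, 0, 2, 0],
[2, 3, 2, 3, 0],
[2, 3, 2, 3, 3],
[2, 3, 3, 0, 0],
[2, 3, 3, 0, 2],
[2, 3, 3, 1, 0],
[2, 3, 3, 2, 1],
[2, 3, 3, 2, 3],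
[2, 3, 3, 3, 0],
[2, 3, 3, 3, 1],
[3, 0, 0, 0, 0],
[3, 0, 0, 0, 2],
[3, 0, 0, 2, 0],
[3, 0, 0, 2, 1],
[3, 0, 2, 0, 2],
[3, 0, 2, 1, 0],
[3, 0, 3, 1, 0],
[3, 0, 3, 2, 0],
[3, 0, 3, 2, 1],
[3, 0, 3, 3, 0],
[3, 0, 3, 3, 3],
[3, 1, 0, 0, 0],
[3, 2, 0, 0, 0],
[3, 2, 0, 3, 0],
[3, 2, 0, 3, 1],
[3, 2, 0, 3, 3],
[3, 2, 1, 0, 0],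
[3, 2, 3, 0, 0],
[3, 2, 3, 0, 2],
[3, 2, 3, 1, 0],
[3, 2, 3, 2, 3],
[3, 2, 3, 3, 0],
[3, 2, 3, 3, 1],
[3, 2, 3, 3, 2],
[3, 3, 0, 0, 2],
[3, 3, 0, 2, 1],
[3, 3, 0, 2, 3],
[3, 3, 0, 3, 0],
[3, 3, 1, 0, 0],
[3, 3, 2, 0, 0],
[3, 3, 2, 0, 3],
[3, 3, 2, 1, 0],
[3, 3, 2, 3, 0],
[3, 3, 2, 3, 1],
[3, 3, 2, 3, 2],
[3, 3, 3, 0, 0],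
[3, 3, 3, 0, 3],
[3, 3, 3, 2, 0],
[3, 3, 3, 2, 1],
[0, 0, 0, 2, 0, 2],
[0, 0, 3, 2, 0, 0],
[0, 0, 3, 3, 2, 0],
[0, 0, 3, 3, 3, 0],
[0, 2, 0, 0, 0, 0],
[0, 2, 3, 0, 0, 0],
[0, 3, 0, 3, 2, 1],
[0, 3, 3, 2, 1, 0],
[0, 3, 3, 3, 0, 0],
[0, 3, 3, 3, 2, 0],
[2, 0, 0, 3, 2, 0],
[2, 0, 2, 0, 0, 0],
[2, 0, 3, 3, 2, 1],
[2, 3, 0, 0, 0, 0],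
[2, 3, 0, 0, 2, 0],
[2, 3, 0, 2, 0, 2],
[2, 3, 3, 0, 2, 1],
[2, 3, 3, 2, 3, 1],
[3, 0, 3, 2, 1, 0],
[3, 1, 0, 0, 0, 0],
[3, 2, 0, 0, 0, 0],
[3, 2, 0, 3, 1, 0],
[3, 2, 0, 3, 3, 0],
[3, 2, 3, 2, 3, 0],
[3, 3, 2, 0, 0, 0],
[3, 3, 2, 0, 3, 0],
[3, 3, 2, 0, 3, 1],
[3, 3, 2, 1, 0, 0],
[3, 3, 2, 3, 0, 0],
[3, 3, 2, 3, 1, 0],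
[3, 3, 3, 2, 1, 0]]

def cElems : List (Equiv.Perm (Fin 12)) := [
pmk 8842413667692 8842413667692 ,
pmk 8722720459123 8739833159882 ,
pmk 3979089407898 3979089407898 ,
pmk 6201734214786 6201734214786 ,
pmk 736867805641 8031859081499 ,
pmk 8586475937259 8269940872468 ,
pmk 4633217175433 6054390765797 ,
pmk 5927951966409 7929708555373 ,
pmk 3859862012677 3938856225128 ,
pmk 6646075409391 7651782257636 ,
pmk 2143801233684 2143801233684 ,
pmk 4974861408693 5391215460389 ,
pmk 617174597072 6800892987779 ,
pmk 4789641008119 3168570653501 ,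
pmk 7007129020639 3092006991392 ,
pmk 804414021158 7221304495438 ,
pmk 8269940872468 8586475937259 ,
pmk 799418468409 6501944899582 ,
pmk 2944564773502 7459386306999 ,
pmk 5152608136192 7808358126701 ,
pmk 513331019047 1939234406483 ,
pmk 1129109801974 5243836179736 ,
pmk 5878351771446 7317393515058 ,
pmk 1064663538411 3128301639067 ,
pmk 7742780171379 3684811358481 ,
pmk 7181071333392 7181071333392 ,
pmk 3728741437641 4150054716082 ,
pmk 6005056319911 7166517642658 ,
pmk 318555464601 3409019831063 ,
pmk 2782864729513 6841227692167 ,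
pmk 1849828271709 3531501951494 ,
pmk 4562909174219 447788646701 ,
pmk 178650102807 1333246647491 ,
pmk 895609009779 2695330579238 ,
pmk 7101647120249 4642578238408 ,
pmk 480930075208 1162185538811 ,
pmk 5438611981286 1323885603524 ,
pmk 5995498181926 5995498181926 ,
pmk 4670413612898 2685772460261 ,
pmk 6713621624908 2660382609082 ,
pmk 2954355818161 7893413907698 ,
pmk 5784986013202 2281882386883 ,
pmk 1365811819053 1365811819053 ,
pmk 5600195345492 2358446048992 ,
pmk 7817683358012 1439682103684 ,
pmk 1553051243139 6410749910961 ,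
pmk 8739833159882 8722720459123 ,
pmk 7166517642658 6005056319911 ,
pmk 3661195222124 7775921599886 ,
pmk 1425558394634 7505089793421 ,
pmk 5595665606091 1706163575248 ,
pmk 6997803789328 3401417494101 ,
pmk 6291092782876 3358915002619 ,
pmk 7675464104671 7391840091482 ,
pmk 4952842732827 7216774756037 ,
pmk 5559962409826 3021902033678 ,
pmk 3401417494101 6997803789328 ,
pmk 351631201438 3012110989019 ,
pmk 1333246647491 178650102807 ,
pmk 5243836179736 1129109801974 ,
pmk 4947912871748 6506874760661 ,
pmk 1020653103624 2521182209172 ,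
pmk 7893413907698 2954355818161 ,
pmk 3684811358481 7742780171379 ,
pmk 2874256793012 2874256793012 ,
pmk 7221304495438 804414021158 ,
pmk 2317747073598 2317747073598 ,
pmk 6030673106106 974913764814 ,
pmk 598422611116 6370516747199 ,
pmk 4150054716082 3728741437641 ,
pmk 6501944899582 799418468409 ,
pmk 7082859321637 989204688868 ,
pmk 5701479954808 6356393038149 ,
pmk 522692082022 2243912620631 ,
pmk 5176289964219 7524176190377 ,
pmk 2521182209172 1020653103624 ,
pmk 6841227692167 2782864729513 ,
pmk 3128301639067 1064663538411 ,
pmk 974913764814 6030673106106 ,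
pmk 1884776013769 2303659196212 ,
pmk 4651195813594 1507228319201 ,
pmk 2685772460261 4670413612898 ,
pmk 447788646701 4562909174219 ,
pmk 5753307677601 6753693541892 ,
pmk 2303659196212 1884776013769 ,
pmk 6970526794033 6249166567347 ,
pmk 2243912620631 522692082022 ,
pmk 3012110989019 351631201438 ,
pmk 4306845780127 3832026638187 ,
pmk 164395010417 4960606316303 ,
pmk 1604813274262 6694535208944 ,
pmk 5220154351709 4539293037862 ,
pmk 1323885603524 5438611981286 ,
pmk 1939234406483 513331019047 ,
pmk 6626988993427 7563818146401 ,
pmk 1875217875784 1875217875784 ,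
pmk 8553334508752 8553334508752 ,
pmk 7929708555373 5927951966409 ,
pmk 4539293037862 5220154351709 ,
pmk 6753693541892 5753307677601 ,
pmk 3531501951494 1849828271709 ,
pmk 2660382609082 6713621624908 ,
pmk 5373463760412 5373463760412 ,
pmk 989204688868 7082859321637 ,
pmk 1706163575248 5595665606091 ,
pmk 7912165874646 2214336171366 ,
pmk 1291484661269 5030126017477 ,
pmk 6249166567347 6970526794033 ,
pmk 6800892987779 617174597072 ,
pmk 5480968178367 5480968178367 ,
pmk 7524176190377 5176289964219 ,
pmk 3021902033678 5559962409826 ,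
pmk 6595540578671 634287297831 ,
pmk 2176366405114 7473641380381 ,
pmk 6410749910961 1553051243139 ,
pmk 8628237944073 8360084795953 ,
pmk 2358446048992 5600195345492 ,
pmk 2214336171366 7912165874646 ,
pmk 7406095164864 7611447573972 ,
pmk 2590863156728 3555183798529 ,
pmk 5545838700776 3447156812319 ,
pmk 6159972228564 2749788992676 ,
pmk 3555183798529 2590863156728 ,
pmk 5030126017477 1291484661269 ,
pmk 5840680603538 6581715486973 ,
pmk 5117397380348 1403817416969 ,
pmk 7505089793421 1425558394634 ,
pmk 7459386306999 2944564773502 ,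
pmk 89518473033 2353450496243 ,
pmk 1039273687232 1780308570667 ,
pmk 5391215460389 4974861408693 ,
pmk 85054425302 1710627622979 ,
pmk 8284195964858 8284195964858 ,
pmk 6356393038149 5701479954808 ,
pmk 8027293510434 5937510104394 ,
pmk 3092006991392 7007129020639 ,
pmk 2281882386883 5784986013202 ,
pmk 6994142949398 6994142949398 ,
pmk 254538933902 5461750398071 ,
pmk 6506874760661 4947912871748 ,
pmk 1972740125004 5771160902496 ,
pmk 731872252892 7971912448511 ,
pmk 8369212952254 8195064335084 ,
pmk 3938856225128 3859862012677 ,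
pmk 6054390765797 4633217175433 ,
pmk 7216774756037 4952842732827 ,
pmk 900073038502 1493104610151 ,
pmk 8315644379482 8190600287353 ,
pmk 3447156812319 5545838700776 ,
pmk 229149082723 5349417642371 ,
pmk 7473641380381 2176366405114 ,
pmk 4642578238408 7101647120249 ,
pmk 210098517431 210098517431 ,
pmk 7317393515058 5878351771446 ,
pmk 3168570653501 4789641008119 ,
pmk 1439682103684 7817683358012 ,
pmk 5771160902496 1972740125004 ,
pmk 8782467034704 8782467034704 ,
pmk 4785111268718 3114213780689 ,
pmk 4316439749776 4142291132606 ,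
pmk 2641762006466 6406220190568 ,
pmk 2548360665246 3496291214658 ,
pmk 3164005082436 1074221676396 ,
pmk 7391840091482 7675464104671 ,
pmk 8837418114943 8837418114943 ,
pmk 2850640637647 2134010208033 ,
pmk 7808358126701 5152608136192 ,
pmk 8424101326652 8457177063489 ,
pmk 4257281416828 4137361271527 ,
pmk 8360084795953 8628237944073 ,
pmk 634287297831 6595540578671 ,
pmk 7971912448511 731872252892 ,
pmk 1493104610151 900073038502 ,
pmk 6406220190568 2641762006466 ,
pmk 6370516747199 598422611116 ,
pmk 1162185538811 480930075208 ,
pmk 1831207669093 3505885165299 ,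
pmk 8703968473167 8703968473167 ,
pmk 3752357573998 3752357573998 ,
pmk 8031859081499 736867805641 ,
pmk 1403817416969 5117397380348 ,
pmk 4960606316303 164395010417 ,
pmk 7312499485643 676921172653 ,
pmk 3331736795233 3331736795233 ,
pmk 7651782257636 6646075409391 ,
pmk 1780308570667 1039273687232 ,
pmk 2695330579238 895609009779 ,
pmk 5461750398071 254538933902 ,
pmk 3496291214658 2548360665246 ,
pmk 1258307401098 1258307401098 ,
pmk 3114213780689 4785111268718 ,
pmk 7775921599886 3661195222124 ,
pmk 3054467206824 6272304984264 ,
pmk 3822665575212 4219574417256 ,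
pmk 2353450496243 89518473033 ,
pmk 2134010208033 2850640637647 ,
pmk 2749788992676 6159972228564 ,
pmk 6694535208944 1604813274262 ,
pmk 5349417642371 229149082723 ,
pmk 7563818146401 6626988993427 ,
pmk 4342056535971 4365738363998 ,
pmk 3409019831063 318555464601 ,
pmk 6183588364921 2068861987159 ,
pmk 1737841910849 4749407825349 ,
pmk 2516288179757 4735284135307 ,
pmk 2102003415666 6864909520194 ,
pmk 7611447573972 7406095164864 ,
pmk 8334694944774 8618876881098 ,
pmk 3832026638187 4306845780127 ,
pmk 3326806934154 3326806934154 ,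
pmk 6581715486973 5840680603538 ,
pmk 5126991349997 5126991349997 ,
pmk 5937510104394 8027293510434 ,
pmk 5067833017049 5067833017049 ,
pmk 1074221676396 3164005082436 ,
pmk 4164309808472 4164309808472 ,
pmk 1710627622979 85054425302 ,
pmk 676921172653 7312499485643 ,
pmk 8190600287353 8315644379482 ,
pmk 8618876881098 8334694944774 ,
pmk 263667090203 263667090203 ,
pmk 3924732535086 3924732535086 ,
pmk 4735284135307 2516288179757 ,
pmk 4137361271527 4257281416828 ,
pmk 8195064335084 8369212952254 ,
pmk 3974559668497 3974559668497 ,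
pmk 4365738363998 4342056535971 ,
pmk 3840644213373 3840644213373 ,
pmk 4749407825349 1737841910849 ,
pmk 6864909520194 2102003415666 ,
pmk 8127518119567 8127518119567 ,
pmk 1507228319201 4651195813594 ,
pmk 3358915002619 6291092782876 ,
pmk 8123054071836 8123054071836 ,
pmk 4142291132606 4316439749776 ,
pmk 8457177063489 8424101326652 ,
pmk 3505885165299 1831207669093 ,
pmk 6272304984264 3054467206824 ,
pmk 2068861987159 6183588364921 ,
pmk 4219574417256 3822665575212 ]

def tbl : List (List Nat) := [
[1,5,8,6,7,16,17,18,26,19,20,21,22,23,24,25,46,47,48,49,50,99,29,51,52,53,69,54,55,56,57,58,59,39,110,36,75,60,61,62,63,64,65,66,67,68,0,184,117,118,84,191,158,107,103,119,90,120,182,186,78,76,121,113,188,44,122,123,124,143,125,126,160,43,155,77,127,172,85,128,129,154,130,101,100,199,201,93,200,91,12,81,153,152,74,131,132,133,92,134,10,135,136,137,138,202,34,151,179,116,139,140,181,141,80,142,111,4,230,209,161,222,195,42,196,189,70,173,41,229,204,156,157,98,210,205,148,206,102,211,149,212,167,2,213,166,197,224,104,109,114,15,187,97,203,163,165,164,2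14,226,192,183,185,233,177,236,144,207,234,235,72,174,35,38,31,108,28,96,215,112,145,175,171,30,3,32,162,194,79,71,231,237,238,88,87,73,232,105,86,37,168,216,228,89,190,217,27,218,159,176,11,106,40,180,14,221,220,83,115,169,198,225,33,208,219,227,239,178,146,150,9,82,45,94,193,147,95,13,170,223],
[2,8,0,10,13,26,20,23,1,30,3,32,38,4,40,43,69,50,51,57,6,59,61,7,63,66,5,79,74,76,9,82,11,83,86,98,92,95,12,101,14,103,109,15,111,114,143,84,191,120,17,18,113,122,128,155,127,19,130,21,131,22,135,24,137,116,25,140,80,16,104,136,146,151,28,153,29,97,156,27,68,108,31,33,47,165,34,166,169,181,173,175,36,144,176,37,178,77,35,186,184,39,189,41,70,192,198,195,81,42,201,44,203,52,45,208,65,237,161,163,49,205,53,149,129,138,148,56,54,124,58,60,215,172,162,62,71,64,125,216,67,158,159,46,93,194,72,168,126,123,232,73,213,75,179,55,78,221,141,142,197,118,134,119,225,85,87,226,147,88,228,190,133,90,231,91,94,227,96,154,187,89,204,230,100,210,99,180,206,102,171,48,105,219,145,107,229,160,106,236,235,110,238,112,182,121,188,239,115,233,185,220,214,152,212,132,139,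222,223,193,211,157,217,218,234,164,167,177,170,196,183,174,150,209,224,200,199,117,202,207],
[3,9,10,0,11,27,28,29,30,1,2,4,31,32,33,34,70,71,72,73,74,39,75,76,77,78,79,5,6,7,8,12,13,14,15,80,81,96,82,21,83,84,85,86,87,88,144,103,171,145,136,146,147,148,149,116,150,151,99,101,152,153,154,97,187,155,156,157,98,104,16,17,18,19,20,22,23,24,25,26,35,36,38,40,41,42,43,44,45,158,159,160,108,143,177,178,37,63,68,58,110,59,161,47,69,162,163,164,92,165,100,166,167,168,169,202,55,239,189,198,194,219,126,128,204,220,122,232,123,182,186,213,139,218,192,179,50,180,211,132,221,181,173,93,46,49,51,52,53,54,56,57,60,61,62,65,66,67,89,90,91,102,105,106,107,109,111,112,113,114,222,48,223,142,224,197,227,94,95,135,137,141,129,199,201,200,130,64,233,118,191,190,134,205,120,225,212,175,119,183,185,184,115,226,124,193,209,237,238,206,235,138,196,131,229,216,215,228,133,121,125,140,170,172,174,195,203,176,217,214,236,234,127,188,231,210,230,207,208,117],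
[4,12,13,14,15,35,36,37,38,39,40,41,42,43,44,45,89,90,87,91,92,93,94,95,96,97,98,99,21,100,101,102,103,104,105,106,107,108,109,110,111,112,113,114,115,116,170,171,26,172,173,166,34,167,72,174,69,175,10,144,83,176,177,178,63,179,77,76,180,181,182,62,139,58,59,183,184,143,185,186,187,188,189,70,190,191,192,193,125,78,194,67,195,196,197,81,82,46,198,199,200,201,202,203,204,1,205,51,206,52,207,208,118,86,65,73,154,136,150,56,133,85,226,124,9,7,147,16,146,30,3,33,32,47,164,227,135,24,23,153,29,17,220,228,229,134,216,152,168,129,132,130,61,230,2,231,210,217,50,211,148,232,225,127,141,48,219,28,213,138,155,157,84,145,25,140,160,68,31,0,117,156,233,234,235,119,236,237,88,238,221,5,8,6,162,18,122,126,121,142,19,239,137,161,209,165,169,149,151,223,163,212,27,22,79,11,75,49,131,20,214,222,120,60,128,158,74,80,55,53,224,66,215,218,54,57,159,71,64,123],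
[46,0,143,184,117,1,3,4,2,230,100,210,90,237,214,151,5,6,7,9,10,11,12,13,14,15,8,206,176,22,183,174,185,222,106,172,35,199,173,33,212,128,123,73,65,232,16,17,18,19,20,23,24,25,27,28,29,30,31,32,37,38,39,40,41,42,43,44,45,26,126,189,170,195,94,36,61,75,60,188,114,91,231,217,50,78,198,194,193,203,56,89,98,87,233,236,177,153,133,21,84,83,138,54,148,197,211,53,175,149,34,116,179,63,150,218,109,48,49,55,57,62,66,67,68,70,71,76,79,80,82,95,96,97,99,101,102,103,104,110,111,113,115,69,166,180,228,235,136,140,229,107,93,92,81,74,131,132,52,208,72,120,186,155,157,156,145,142,200,219,238,182,77,127,171,181,209,164,227,108,213,112,58,161,47,162,59,152,64,125,204,51,160,234,187,122,124,146,220,85,88,86,105,154,130,135,137,167,223,119,134,139,141,144,158,178,201,205,207,224,216,215,121,239,147,221,159,225,202,129,118,190,196,163,168,169,165,191,192,226],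
[2,8,0,10,13,26,20,23,1,30,3,32,38,4,40,43,69,50,51,57,6,59,61,7,63,66,5,79,74,76,9,82,11,83,86,98,92,95,12,101,14,103,109,15,111,114,143,84,191,120,17,18,113,122,128,155,127,19,130,21,131,22,135,24,137,116,25,140,80,16,104,136,146,151,28,153,29,97,156,27,68,108,31,33,47,165,34,166,169,181,173,175,36,144,176,37,178,77,35,186,184,39,189,41,70,192,198,195,81,42,201,44,203,52,45,208,65,237,161,163,49,205,53,149,129,138,148,56,54,124,58,60,215,172,162,62,71,64,125,216,67,158,159,46,93,194,72,168,126,123,232,73,213,75,179,55,78,221,141,142,197,118,134,119,225,85,87,226,147,88,228,190,133,90,231,91,94,227,96,154,187,89,204,230,100,210,99,180,206,102,171,48,105,219,145,107,229,160,106,236,235,110,238,112,182,121,188,239,115,233,185,220,214,152,212,132,139,222,223,193,211,157,217,218,234,164,167,177,170,196,183,174,150,209,224,200,199,117,202,207],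
[3,9,10,0,11,27,28,29,30,1,2,4,31,32,33,34,70,71,72,73,74,39,75,76,77,78,79,5,6,7,8,12,13,14,15,80,81,96,82,21,83,84,85,86,87,88,144,103,171,145,136,146,147,148,149,116,150,151,99,101,152,153,154,97,187,155,156,157,98,104,16,17,18,19,20,22,23,24,25,26,35,36,38,40,41,42,43,44,45,158,159,160,108,143,177,178,37,63,68,58,110,59,161,47,69,162,163,164,92,165,100,166,167,168,169,202,55,239,189,198,194,219,126,128,204,220,122,232,123,182,186,213,139,218,192,179,50,180,211,132,221,181,173,93,46,49,51,52,53,54,56,57,60,61,62,65,66,67,89,90,91,102,105,106,107,109,111,112,113,114,222,48,223,142,224,197,227,94,95,135,137,141,129,199,201,200,130,64,233,118,191,190,134,205,120,225,212,175,119,183,185,184,115,226,124,193,209,237,238,206,235,138,196,131,229,216,215,228,133,121,125,140,170,172,174,195,203,176,217,214,236,234,127,188,231,210,230,207,208,117],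
[179,105,154,130,0,191,193,125,192,124,58,215,1,2,3,4,127,141,195,200,219,28,213,138,137,174,48,212,167,140,129,178,132,131,52,5,6,7,8,9,10,11,12,13,14,15,97,133,165,217,158,107,109,229,234,228,119,235,73,74,223,152,71,64,238,114,231,91,177,56,83,237,54,115,226,216,67,66,89,214,227,95,96,60,172,121,113,18,188,16,17,19,20,21,22,23,24,25,26,27,29,30,31,32,33,34,35,36,37,38,39,40,41,42,43,44,45,180,112,185,222,198,196,239,123,88,197,163,224,149,151,218,150,120,145,136,117,202,169,72,175,164,199,77,59,173,128,126,160,207,118,208,147,139,116,170,181,171,225,236,176,203,194,210,134,205,51,53,148,206,46,47,49,50,55,57,61,62,63,65,68,69,70,75,76,78,79,80,81,82,84,85,86,87,90,92,93,94,98,99,100,101,102,103,104,106,108,110,111,204,156,159,211,168,220,232,146,157,233,166,142,190,221,209,230,162,122,135,143,144,153,155,161,182,183,184,186,187,189,201]]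

def encs : List Nat := [8842413667692,8722720459123,3979089407898,6201734214786,736867805641,8586475937259,4633217175433,5927951966409,3859862012677,6646075409391,2143801233684,4974861408693,617174597072,4789641008119,7007129020639,804414021158,8269940872468,799418468409,2944564773502,5152608136192,513331019047,1129109801974,5878351771446,1064663538411,7742780171379,7181071333392,3728741437641,6005056319911,318555464601,2782864729513,1849828271709,4562909174219,178650102807,895609009779,7101647120249,480930075208,5438611981286,5995498181926,4670413612898,6713621624908,2954355818161,5784986013202,1365811819053,5600195345492,7817683358012,1553051243139,8739833159882,7166517642658,3661195222124,1425558394634,5595665606091,6997803789328,6291092782876,7675464104671,4952842732827,5559962409826,3401417494101,351631201438,1333246647491,5243836179736,4947912871748,1020653103624,7893413907698,3684811358481,2874256793012,7221304495438,2317747073598,6030673106106,598422611116,4150054716082,6501944899582,7082859321637,5701479954808,522692082022,5176289964219,2521182209172,6841227692167,3128301639067,974913764814,1884776013769,4651195813594,2685772460261,447788646701,5753307677601,2303659196212,6970526794033,2243912620631,3012110989019,4306845780127,164395010417,1604813274262,5220154351709,1323885603524,1939234406483,6626988993427,1875217875784,8553334508752,7929708555373,4539293037862,6753693541892,3531501951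494,2660382609082,5373463760412,989204688868,1706163575248,7912165874646,1291484661269,6249166567347,6800892987779,5480968178367,7524176190377,3021902033678,6595540578671,2176366405114,6410749910961,8628237944073,2358446048992,2214336171366,7406095164864,2590863156728,5545838700776,6159972228564,3555183798529,5030126017477,5840680603538,5117397380348,7505089793421,7459386306999,89518473033,1039273687232,5391215460389,85054425302,8284195964858,6356393038149,8027293510434,3092006991392,2281882386883,6994142949398,254538933902,6506874760661,1972740125004,731872252892,8369212952254,3938856225128,6054390765797,7216774756037,900073038502,8315644379482,3447156812319,229149082723,7473641380381,4642578238408,210098517431,7317393515058,3168570653501,1439682103684,5771160902496,8782467034704,4785111268718,4316439749776,2641762006466,2548360665246,3164005082436,7391840091482,8837418114943,2850640637647,7808358126701,8424101326652,4257281416828,8360084795953,634287297831,7971912448511,1493104610151,6406220190568,6370516747199,1162185538811,1831207669093,8703968473167,3752357573998,8031859081499,1403817416969,4960606316303,7312499485643,3331736795233,7651782257636,1780308570667,2695330579238,5461750398071,3496291214658,1258307401098,3114213780689,7775921599886,3054467206824,3822665575212,2353450496243,2134010208033,2749788992676,6694535208944,5349417642371,7563818146401,4342056535971,3409019831063,6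183588364921,1737841910849,2516288179757,2102003415666,7611447573972,8334694944774,3832026638187,3326806934154,6581715486973,5126991349997,5937510104394,5067833017049,1074221676396,4164309808472,1710627622979,676921172653,8190600287353,8618876881098,263667090203,3924732535086,4735284135307,4137361271527,8195064335084,3974559668497,4365738363998,3840644213373,4749407825349,6864909520194,8127518119567,1507228319201,3358915002619,8123054071836,4142291132606,8457177063489,3505885165299,6272304984264,2068861987159,4219574417256]

def encL8 : List Nat := [8722720459123,3979089407898,6201734214786,736867805641,8739833159882,3979089407898,6201734214786,8031859081499]

def encId : Nat := 8842413667692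

def gmap : Fin 4 → Equiv.Perm (Fin 12) := ![q1, q2, q3, q4]

def elems : List (Equiv.Perm (Fin 12)) := wordsI.map fun w => (w.map gmap).prod

def L8 : List (Equiv.Perm (Fin 12)) := [q1, q2, q3, q4, q1⁻¹, q2⁻¹, q3⁻¹, q4⁻¹]

lemma zipAll {α β : Type} {p : α → β → Prop} [∀ a b, Decidable (p a b)]
    {l1 : List α} {l2 : List β}
    (h : ((l1.zip l2).all fun x => decide (p x.1 x.2)) = true) :
    ∀ k, (h1 : k < l1.length) → (h2 : k < l2.length) → p l1[k] l2[k] := by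
  intro k h1 h2
  have hlen : k < (l1.zip l2).length := by
    rw [List.length_zip]; omega
  have hm : (l1[k], l2[k]) ∈ l1.zip l2 := by
    have hz : (l1.zip l2)[k] = (l1[k], l2[k]) := List.getElem_zip
    rw [← hz]
    exact List.getElem_mem _
  exact of_decide_eq_true (List.all_eq_true.mp h _ hm)

lemma hcodeElemsB :
    ((encs.zip cElems).all fun ec => decide (Codes ec.1 ec.2)) = true := by decide +kernel

lemma hcodeWordsB :
    ((encs.zip elems).all fun ec => decide (Codes ec.1 ec.2)) = true := by decide +kernel

lemma hcodeL8B :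
    ((encL8.zip L8).all fun ec => decide (Codes ec.1 ec.2)) = true := by decide +kernel

lemma htblB :
    ((encL8.zip tbl).all fun gr => decide (gr.2.length = 240 ∧
      ((encs.zip gr.2).all fun sk => decide (sk.2 < 240 ∧
        mulE gr.1 sk.1 = encs.getD sk.2 0)) = true)) = true := by decide +kernel

lemma hencf : cElems.map encf = encs := by decide +kernel

lemma hencnodup : encs.Nodup := by decide +kernel

lemma hencsLen : encs.length = 240 := rfl
lemma hcElen : cElems.length = 240 := rfl
lemma hwLen : elems.length = 240 := by simp [elems, wordsI]
lemma hL8len : L8.length = 8 := rfl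
lemma hencL8len : encL8.length = 8 := rfl
lemma htblLen : tbl.length = 8 := rfl

lemma hcodeElems (k : Nat) (h : k < 240) :
    Codes (encs[k]'(by rw [hencsLen]; omega)) (cElems[k]'(by rw [hcElen]; omega)) :=
  zipAll hcodeElemsB k (by rw [hencsLen]; omega) (by rw [hcElen]; omega)

lemma hone : (1 : Equiv.Perm (Fin 12)) ∈ cElems := by
  have h0 : Codes (encs[0]'(by rw [hencsLen]; omega)) (cElems[0]'(by rw [hcElen]; omega)) :=
    hcodeElems 0 (by omega)
  have h1 : Codes (encs[0]'(by rw [hencsLen]; omega)) (1 : Equiv.Perm (Fin 12)) := by decide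
  rw [codes_eq h1 h0]
  exact List.getElem_mem _

lemma helem : elems = cElems := by
  apply List.ext_getElem (hwLen.trans hcElen.symm)
  intro k h1 h2
  have hk : k < 240 := hwLen ▸ h1
  exact codes_eq (zipAll hcodeWordsB k (by rw [hencsLen]; omega) h1) (hcodeElems k hk)

lemma hstep : ∀ g ∈ L8, ∀ s ∈ cElems, g * s ∈ cElems := by
  intro g hg s hs
  obtain ⟨i, hi, rfl⟩ := List.getElem_of_mem hg
  obtain ⟨j, hj, rfl⟩ := List.getElem_of_mem hs
  have hi8 : i < 8 := hL8len ▸ hi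
  have hj240 : j < 240 := hcElen ▸ hj
  have hrow := zipAll (p := fun g row => row.length = 240 ∧
      ((encs.zip row).all fun sk => decide (sk.2 < 240 ∧
        mulE g sk.1 = encs.getD sk.2 0)) = true) htblB i
    (by rw [hencL8len]; omega) (by rw [htblLen]; omega)
  obtain ⟨hrlen, hall⟩ := hrow
  have hcell := zipAll (p := fun s k => k < 240 ∧
      mulE (encL8[i]'(by rw [hencL8len]; omega)) s = encs.getD k 0) hall j
    (by rw [hencsLen]; omega) (by rw [hrlen]; omega)
  obtain ⟨hk240, heq⟩ := hcell
  set k := (tbl[i]'(by rw [htblLen]; omega))[j]'(by rw [hrlen]; omega) with hkdef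
  have hCk : Codes (encs[k]'(by rw [hencsLen]; omega)) (cElems[k]'(by rw [hcElen]; omega)) :=
    hcodeElems k hk240
  have hgd : encs.getD k 0 = encs[k]'(by rw [hencsLen]; omega) :=
    List.getD_eq_getElem _ _ _
  have hCmul : Codes (encs[k]'(by rw [hencsLen]; omega))
      ((L8[i]'hi) * (cElems[j]'hj)) := by
    rw [← hgd, ← heq]
    exact codes_mul (zipAll hcodeL8B i (by rw [hencL8len]; omega) hi)
      (hcodeElems j hj240)
  rw [codes_eq hCmul hCk]
  exact List.getElem_mem _

lemma prodmem : ∀ l : List (Equiv.Perm (Fin 12)),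
    (∀ y ∈ l, y ∈ L8) → l.prod ∈ cElems
  | [], _ => hone
  | g :: l, h => by
    rw [List.prod_cons]
    exact hstep g (h g (by simp)) _ (prodmem l fun y hy => h y (by simp [hy]))

lemma hclosure : ∀ x : Equiv.Perm (Fin 12),
    x ∈ Subgroup.closure ({q1, q2, q3, q4} : Set (Equiv.Perm (Fin 12))) ↔ x ∈ cElems := by
  intro x
  constructor
  · intro hx
    rw [← Subgroup.mem_toSubmonoid, Subgroup.closure_toSubmonoid] at hx
    obtain ⟨l, hl, rfl⟩ := Submonoid.exists_list_of_mem_closure hx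
    refine prodmem l fun y hy => ?_
    rcases hl y hy with h | h
    · simp only [Set.mem_insert_iff, Set.mem_singleton_iff] at h
      rcases h with rfl | rfl | rfl | rfl <;> simp [L8]
    · rw [Set.mem_inv] at h
      simp only [Set.mem_insert_iff, Set.mem_singleton_iff] at h
      have hy2 : y = y⁻¹⁻¹ := (inv_inv y).symm
      rcases h with h | h | h | h <;> rw [hy2, h] <;> simp [L8]
  · intro hx
    rw [← helem] at hx
    obtain ⟨w, hw, rfl⟩ := List.mem_map.mp hx
    refine list_prod_mem fun g hg => ?_
    obtain ⟨a, _, rfl⟩ := List.mem_map.mp hg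
    apply Subgroup.subset_closure
    fin_cases a <;> simp [gmap]

lemma hnodup : cElems.Nodup := List.Nodup.of_map encf (hencf ▸ hencnodup)

/-- Aut(M₂): the subgroup of S₁₂ generated by
g₁ = (0 7 3 4 2)(1 9 10 8 6), g₂ = (0 6)(1 7)(2 8)(3 9)(4 10)(5 11),
g₃ = (0 6)(1 9)(2 5)(3 7)(4 10)(8 11) and the 12-cycle ζ has order 240. -/
theorem stmt_5 :
    let g₁ : Equiv.Perm (Fin 12) := c[0, 7, 3, 4, 2] * c[1, 9, 10, 8, 6]
    let g₂ : Equiv.Perm (Fin 12) :=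
      c[0, 6] * c[1, 7] * c[2, 8] * c[3, 9] * c[4, 10] * c[5, 11]
    let g₃ : Equiv.Perm (Fin 12) :=
      c[0, 6] * c[1, 9] * c[2, 5] * c[3, 7] * c[4, 10] * c[8, 11]
    let ζ : Equiv.Perm (Fin 12) := c[0, 1, 2, 3, 4, 5, 6, 7, 8, 9, 10, 11]
    Nat.card (Subgroup.closure {g₁, g₂, g₃, ζ} : Subgroup (Equiv.Perm (Fin 12)))
      = 240 := by
  show Nat.card (Subgroup.closure
      {(c[0, 7, 3, 4, 2] * c[1, 9, 10, 8, 6] : Equiv.Perm (Fin 12)),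
       c[0, 6] * c[1, 7] * c[2, 8] * c[3, 9] * c[4, 10] * c[5, 11],
       c[0, 6] * c[1, 9] * c[2, 5] * c[3, 7] * c[4, 10] * c[8, 11],
       c[0, 1, 2, 3, 4, 5, 6, 7, 8, 9, 10, 11]} : Subgroup (Equiv.Perm (Fin 12))) = 240
  rw [show (c[0, 7, 3, 4, 2] * c[1, 9, 10, 8, 6] : Equiv.Perm (Fin 12)) = q1 from
        codes_eq (a := 8722720459123) (by decide) (by decide),
      show (c[0, 6] * c[1, 7] * c[2, 8] * c[3, 9] * c[4, 10] * c[5, 11] :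
        Equiv.Perm (Fin 12)) = q2 from
        codes_eq (a := 3979089407898) (by decide) (by decide),
      show (c[0, 6] * c[1, 9] * c[2, 5] * c[3, 7] * c[4, 10] * c[8, 11] :
        Equiv.Perm (Fin 12)) = q3 from
        codes_eq (a := 6201734214786) (by decide) (by decide),
      show (c[0, 1, 2, 3, 4, 5, 6, 7, 8, 9, 10, 11] : Equiv.Perm (Fin 12)) = q4 from
        codes_eq (a := 736867805641) (by decide) (by decide)]
  have hcard : Nat.card (Subgroup.closure ({q1, q2, q3, q4} : Set (Equiv.Perm (Fin 12))))
      = Nat.card {x // x ∈ cElems.toFinset} :=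
    Nat.card_congr (Equiv.subtypeEquivRight fun x =>
      (hclosure x).trans (List.mem_toFinset).symm)
  rw [hcard, Nat.card_eq_fintype_card, Fintype.card_coe,
      List.toFinset_card_of_nodup hnodup, hcElen]
end

section
/- There exists a group G of order 240 isomorphic to a semidirect product A_5 ⋊ C_4 such that G/Z(G) ≅ S_5 but G contains no subgroup isomorphic to S_5. -/
/-!
Let the generator of `C₄` act on `A₅` by conjugation with a transposition `σ`. Then
`(a, c) ↦ a σ^c` maps `G = A₅ ⋊ C₄` onto `S₅`. Its kernel `{1, (1, c²)}` is central, and it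
contains the centre because `S₅` is centreless, so `G/Z(G) ≅ S₅`. A subgroup `H ≅ S₅` of `G`
meets the centre trivially, hence maps isomorphically onto `S₅`. The preimage `h ∈ H` of `σ` is
then an involution, so its `C₄`-component has order at most two and `σ` raised to it is trivial:
`h` maps to the even permutation `h.left`, contradicting `sign σ = -1`.
-/

/-- The properties required of the group in Statement 7: order 240,
isomorphic to a semidirect product A₅ ⋊ C₄, with G/Z(G) ≅ S₅ but containing
no subgroup isomorphic to S₅. -/
def Stmt7Prop (G : Type) [Group G] : Prop :=
  Nat.card G = 240 ∧
  (∃ φ : Multiplicative (ZMod 4) →* MulAut (alternatingGroup (Fin 5)),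
    Nonempty (G ≃* alternatingGroup (Fin 5) ⋊[φ] Multiplicative (ZMod 4))) ∧
  (∃ f : G →* Equiv.Perm (Fin 5),
    Function.Surjective f ∧ f.ker = Subgroup.center G) ∧
  ¬ ∃ H : Subgroup G, Nonempty (H ≃* Equiv.Perm (Fin 5))

open Equiv Equiv.Perm SemidirectProduct Subgroup

theorem Equiv.Perm.center_eq_bot {α : Type*} [Fintype α] [DecidableEq α]
    (hα : 2 < Fintype.card α) : center (Perm α) = ⊥ := by
  refine eq_bot_iff.2 fun s hs => mem_bot.2 <| Equiv.ext fun a => ?_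
  by_contra ha
  change s a ≠ a at ha
  obtain ⟨c, -, hc⟩ := Finset.exists_mem_notMem_of_card_lt_card (s := {a, s a})
    (t := Finset.univ) ((Finset.card_le_two).trans_lt hα)
  simp only [Finset.mem_insert, Finset.mem_singleton, not_or] at hc
  have hcomm := congrArg (· a) (mem_center_iff.1 hs (swap a c))
  simp only [Perm.coe_mul, Function.comp_apply, swap_apply_left] at hcomm
  rw [swap_apply_of_ne_of_ne ha (Ne.symm hc.2)] at hcomm
  exact hc.1 (s.injective hcomm.symm)

theorem Equiv.Perm.pow_eq_one_of_mem_alternatingGroup {α : Type*} [Fintype α] [DecidableEq α]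
    {σ : Perm α} (hσ : σ ^ 2 = 1) (hsign : sign σ = -1) {k : ℕ}
    (hk : σ ^ k ∈ alternatingGroup α) : σ ^ k = 1 := by
  obtain ⟨m, rfl | rfl⟩ := Nat.even_or_odd' k
  · rw [pow_mul, hσ, one_pow]
  · rw [mem_alternatingGroup, map_pow, hsign, pow_succ, pow_mul] at hk
    simp at hk

theorem Subgroup.inf_center_eq_bot_of_mulEquiv {G K : Type*} [Group G] [Group K]
    {H : Subgroup G} (e : H ≃* K) (hK : center K = ⊥) : H ⊓ center G = ⊥ := by
  refine eq_bot_iff.2 fun z ⟨hzH, hz⟩ => ?_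
  have hcen_H : (⟨z, hzH⟩ : H) ∈ center H :=
    mem_center_iff.2 fun h => Subtype.ext (mem_center_iff.1 hz h)
  have h1 : e ⟨z, hzH⟩ ∈ center K := MulEquivClass.apply_mem_center e hcen_H
  rw [hK, mem_bot, MulEquiv.map_eq_one_iff] at h1
  exact mem_bot.2 (congrArg Subtype.val h1)

theorem Subgroup.center_le_ker_of_surjective {G K : Type*} [Group G] [Group K] {f : G →* K}
    (hf : Function.Surjective f) (hK : center K = ⊥) : center G ≤ f.ker := by
  intro z hz
  rw [MonoidHom.mem_ker, ← mem_bot, ← hK, mem_center_iff]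
  intro k
  obtain ⟨g, rfl⟩ := hf k
  rw [← map_mul, ← map_mul, mem_center_iff.1 hz]

namespace SemidirectProduct

theorem inr_mem_center {N C : Type*} [Group N] [CommGroup C] {φ : C →* MulAut N} {c : C}
    (hc : φ c = 1) : inr c ∈ center (N ⋊[φ] C) :=
  mem_center_iff.2 fun x => by ext <;> simp [hc, mul_comm]

variable {S C : Type*} [Group S] (N : Subgroup S) [N.Normal]

def conjLift [Group C] (ψ : C →* S) : N ⋊[MulAut.conjNormal.comp ψ] C →* S :=
  lift N.subtype ψ fun c => by ext; simp [MulAut.conjNormal_apply]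

theorem conjLift_apply [Group C] (ψ : C →* S) (x : N ⋊[MulAut.conjNormal.comp ψ] C) :
    conjLift N ψ x = x.left * ψ x.right := rfl

theorem conjLift_surjective [Group C] {ψ : C →* S} (h : ∀ s, ∃ c, s * (ψ c)⁻¹ ∈ N) :
    Function.Surjective (conjLift N ψ) := fun s => by
  obtain ⟨c, hc⟩ := h s
  exact ⟨⟨⟨_, hc⟩, c⟩, by simp [conjLift_apply]⟩

theorem ker_conjLift_le_center [CommGroup C] {ψ : C →* S} (h : ∀ c, ψ c ∈ N → ψ c = 1) :
    (conjLift N ψ).ker ≤ center _ := fun x hx => by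
  have hx' : ψ x.right = (x.left : S)⁻¹ := eq_inv_of_mul_eq_one_right hx
  have hψ : ψ x.right = 1 := h _ (hx' ▸ inv_mem x.left.2)
  have hleft : x.left = 1 := by
    rw [hψ, eq_comm, inv_eq_one] at hx'
    exact Subtype.ext hx'
  rw [← inl_left_mul_inr_right x, hleft, map_one, one_mul]
  exact inr_mem_center (by simp [hψ])

end SemidirectProduct

def zmodPowHom {M : Type*} [Monoid M] {n : ℕ} [NeZero n] (g : M) (hg : g ^ n = 1) :
    Multiplicative (ZMod n) →* M where
  toFun k := g ^ (Multiplicative.toAdd k).val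
  map_one' := by simp
  map_mul' a b := by rw [toAdd_mul, ZMod.val_add, ← pow_eq_pow_mod _ hg, pow_add]

namespace A5C4

abbrev C4 := Multiplicative (ZMod 4)

def σ : Perm (Fin 5) := swap 0 1

theorem σ_sq : σ ^ 2 = 1 := (sq σ).trans (swap_mul_self 0 1)

theorem sign_σ : sign σ = -1 := sign_swap (by decide)

def ψ : C4 →* Perm (Fin 5) :=
  zmodPowHom σ (by rw [show 4 = 2 * 2 from rfl, pow_mul, σ_sq, one_pow])

theorem ψ_ofAdd_one : ψ (.ofAdd 1) = σ := pow_one σ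

theorem ψ_eq_one_of_mem {c : C4} (hc : ψ c ∈ alternatingGroup (Fin 5)) : ψ c = 1 :=
  pow_eq_one_of_mem_alternatingGroup σ_sq sign_σ hc

theorem ψ_eq_one_of_sq_eq_one {c : C4} (hc : c ^ 2 = 1) : ψ c = 1 := by
  obtain rfl | rfl : c = 1 ∨ c = .ofAdd 2 := by revert c; decide
  · exact map_one ψ
  · exact σ_sq

abbrev G := alternatingGroup (Fin 5) ⋊[MulAut.conjNormal.comp ψ] C4

def f : G →* Perm (Fin 5) := conjLift _ ψ

theorem f_surjective : Function.Surjective f := conjLift_surjective _ fun s => by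
  rcases Int.units_eq_one_or (sign s) with hs | hs
  · exact ⟨1, by simpa [mem_alternatingGroup] using hs⟩
  · refine ⟨.ofAdd 1, ?_⟩
    rw [mem_alternatingGroup, map_mul, map_inv, hs, ψ_ofAdd_one, sign_σ]
    decide

theorem ker_f_eq_center : f.ker = center G :=
  le_antisymm (ker_conjLift_le_center _ fun _ => ψ_eq_one_of_mem)
    (center_le_ker_of_surjective f_surjective (center_eq_bot (by simp)))

theorem card_G : Nat.card G = 240 := by
  rw [SemidirectProduct.card, nat_card_alternatingGroup]
  simp [Nat.factorial]

theorem no_subgroup_mulEquiv_perm : ¬ ∃ H : Subgroup G, Nonempty (H ≃* Perm (Fin 5)) := by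
  rintro ⟨H, ⟨e⟩⟩
  have hinj : Function.Injective (f.comp H.subtype) := by
    refine (injective_iff_map_eq_one _).2 fun h hh => Subtype.ext ?_
    have hcen : (h : G) ∈ H ⊓ center G := ⟨h.2, ker_f_eq_center ▸ hh⟩
    rwa [inf_center_eq_bot_of_mulEquiv e (center_eq_bot (by simp))] at hcen
  obtain ⟨h, hh⟩ := ((Nat.bijective_iff_injective_and_card _).2
    ⟨hinj, Nat.card_congr e.toEquiv⟩).2 σ
  have hsq : h ^ 2 = 1 := hinj (by rw [map_pow, hh, σ_sq, map_one])
  have hψ : ψ (h : G).right = 1 := ψ_eq_one_of_sq_eq_one <| by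
    rw [← rightHom_eq_right, ← map_pow, ← H.coe_pow, hsq]
    rfl
  have hsign : sign σ = 1 := by
    rw [← hh, MonoidHom.comp_apply, H.subtype_apply, f, conjLift_apply, hψ, mul_one]
    exact (h : G).left.2
  exact absurd (sign_σ.symm.trans hsign) (by decide)

end A5C4

/-- There exists a group of order 240 isomorphic to A₅ ⋊ C₄ with
G/Z(G) ≅ S₅ but with no subgroup isomorphic to S₅. -/
theorem stmt_7 : ∃ (G : Type) (inst : Group G), @Stmt7Prop G inst :=
  ⟨A5C4.G, inferInstance, A5C4.card_G, ⟨_, ⟨MulEquiv.refl _⟩⟩,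
    ⟨A5C4.f, A5C4.f_surjective, A5C4.ker_f_eq_center⟩, A5C4.no_subgroup_mulEquiv_perm⟩
end
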